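/- arXiv:2312.11932 — 2 statements merged into one kernel-verified Lean document; each statement's English description precedes it below -/
import Mathlib

section
/- Let N be a finite set and g_a : {0,1}^N → {0,1} monotonic functions for a ∈ N. If there exists a linear order ◁ on N such that the votes can be resolved sequentially (for each a, after substituting the values X_b for all b ◁ a, the function g_a becomes constant), then the resulting X is the unique solution of the system X_a = g_a(X) for all a ∈ N. -/
/-! On a finite set a strict total order is well-founded, so a solution `Y` agrees with `X`
by induction along `◁`: once `Y` agrees with `X` below `a`, resolvability forces
`Y a = g a Y = X a`. -/

section WellFounded

variable {α β : Type*} {r : α → α → Prop} (g : α → (α → β) → β) (X : α → β)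

theorem isFixedPoint_of_resolves (hres : ∀ a Y, (∀ b, r b a → Y b = X b) → g a Y = X a) :
    ∀ a, X a = g a X :=
  fun a => (hres a X fun _ _ => rfl).symm

theorem eq_of_isFixedPoint_of_resolves (hr : WellFounded r)
    (hres : ∀ a Y, (∀ b, r b a → Y b = X b) → g a Y = X a)
    {Y : α → β} (hY : ∀ a, Y a = g a Y) : Y = X := by
  funext a
  induction a using hr.induction with
  | _ a ih => exact (hY a).trans (hres a Y ih)

end WellFounded

theorem stmt4_general {N : Type} [Fintype N]
    (g : N → (N → Bool) → Bool)
    (lt : N → N → Prop) (hlt : IsStrictTotalOrder N lt)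
    (X : N → Bool)
    (hres : ∀ a (Y : N → Bool), (∀ b, lt b a → Y b = X b) → g a Y = X a) :
    (∀ a, X a = g a X) ∧ ∀ Y : N → Bool, (∀ a, Y a = g a Y) → Y = X := by
  have : IsTrans N lt := hlt.toIsTrans
  have : Std.Irrefl lt := hlt.toIsStrictOrder.toIrrefl
  have hwf : WellFounded lt := Finite.wellFounded_of_trans_of_irrefl lt
  exact ⟨isFixedPoint_of_resolves g X hres,
    fun _ hY => eq_of_isFixedPoint_of_resolves g X hwf hres hY⟩

theorem stmt4 {N : Type} [Fintype N]
    (g : N → (N → Bool) → Bool)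
    (hmono : ∀ a, ∀ x y : N → Bool, (∀ i, x i ≤ y i) → g a x ≤ g a y)
    (lt : N → N → Prop) (hlt : IsStrictTotalOrder N lt)
    (X : N → Bool)
    (hres : ∀ a (Y : N → Bool), (∀ b, lt b a → Y b = X b) → g a Y = X a) :
    (∀ a, X a = g a X) ∧ ∀ Y : N → Bool, (∀ a, Y a = g a Y) → Y = X :=
  stmt4_general g lt hlt X hres
end

section
/- The MinMax unravelling procedure fails cast monotonicity: there exist a set of agents N with |N| = 7 (or any odd n ≥ 5 plus appropriate padding), ballot profile B, an agent a, alternative d = 1, and the profile B' obtained by changing a's ballot to a direct vote for 1, such that the majority aggregation satisfies 1 ∈ maj(MinMax(B)) but 1 ∉ maj(MinMax(B')). -/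
/-- The entry of agent `a`'s ballot selected by certificate `c`. -/
def entry (B : Fin 7 → List (Fin 7 ⊕ Bool)) (c : Fin 7 → ℕ) (a : Fin 7) :
    Fin 7 ⊕ Bool :=
  (B a).getD (c a) (Sum.inr false)

/-- The certificate `c` is consistent for the profile `B`. -/
def ConsistentS (B : Fin 7 → List (Fin 7 ⊕ Bool)) (c : Fin 7 → ℕ) : Prop :=
  (∀ a, c a < (B a).length) ∧
  ∃ lt : Fin 7 → Fin 7 → Prop, IsStrictTotalOrder (Fin 7) lt ∧
    ∀ a b, entry B c a = Sum.inl b → lt b a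

/-- `X` is the collection of concrete votes induced by certificate `c`. -/
def VotesOf (B : Fin 7 → List (Fin 7 ⊕ Bool)) (c : Fin 7 → ℕ)
    (X : Fin 7 → Bool) : Prop :=
  ∀ a, X a = match entry B c a with
    | Sum.inl b => X b
    | Sum.inr d => d

/-- The set of concrete vote vectors obtainable from MinMax certificates. -/
def MinMaxSet (B : Fin 7 → List (Fin 7 ⊕ Bool)) : Set (Fin 7 → Bool) :=
  {X | ∃ c, ConsistentS B c ∧
    (∀ c', ConsistentS B c' → Finset.univ.sup c ≤ Finset.univ.sup c') ∧
    VotesOf B c X}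

/-- Majority aggregation on 7 agents. -/
def maj (X : Fin 7 → Bool) : Bool :=
  decide (4 ≤ (Finset.univ.filter (fun a => X a = true)).card)

/- Under MinMax, the mutual delegation between `a` and `a'` forces both to fall back to their
second preference, a direct vote for `1`, while `z` and the `uᵢ` keep their first preferences:
six of seven votes for `1`. Once `a` votes `1` directly, every agent can use its first
preference, so the `uᵢ` follow `z` and vote `0`, leaving only two votes for `1`. -/

instance (B : Fin 7 → List (Fin 7 ⊕ Bool)) (c : Fin 7 → ℕ) (X : Fin 7 → Bool) :
    Decidable (VotesOf B c X) := by
  unfold VotesOf; infer_instance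

theorem eq_zero_of_univ_sup_eq_zero {ι : Type*} [Fintype ι] {c : ι → ℕ}
    (h : Finset.univ.sup c = 0) : c = 0 :=
  funext fun a => Nat.le_zero.mp (h ▸ Finset.le_sup (Finset.mem_univ a))

section

variable {B : Fin 7 → List (Fin 7 ⊕ Bool)} {c : Fin 7 → ℕ}

theorem not_consistentS_of_entry_cycle {a b : Fin 7} (hab : entry B c a = Sum.inl b)
    (hba : entry B c b = Sum.inl a) : ¬ ConsistentS B c := by
  rintro ⟨-, lt, hlt, hdel⟩
  exact irrefl_of lt a (trans_of lt (hdel b a hba) (hdel a b hab))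

theorem VotesOf.eq_of_consistentS (hc : ConsistentS B c) {X Y : Fin 7 → Bool}
    (hX : VotesOf B c X) (hY : VotesOf B c Y) : X = Y := by
  obtain ⟨-, lt, hlt, hdel⟩ := hc
  have hwf : WellFounded lt := Finite.wellFounded_of_trans_of_irrefl lt
  funext a
  induction a using hwf.induction with
  | _ a ih =>
    rw [hX a, hY a]
    cases h : entry B c a with
    | inl b => exact ih b (hdel a b h)
    | inr d => rfl

theorem votesOf_zero_of_mem_minMaxSet (h0 : ConsistentS B 0) {X : Fin 7 → Bool}
    (hX : X ∈ MinMaxSet B) : VotesOf B 0 X := by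
  obtain ⟨c, -, hmin, hc⟩ := hX
  have hc0 : c = 0 :=
    eq_zero_of_univ_sup_eq_zero (Nat.le_zero.mp ((hmin 0 h0).trans_eq (Finset.sup_bot _)))
  exact hc0 ▸ hc

theorem mem_minMaxSet_of_sup_le_one (hc : ConsistentS B c) (hc1 : Finset.univ.sup c ≤ 1)
    (h0 : ¬ ConsistentS B 0) {X : Fin 7 → Bool} (hX : VotesOf B c X) : X ∈ MinMaxSet B := by
  refine ⟨c, hc, fun c' hc' => hc1.trans (Nat.one_le_iff_ne_zero.mpr fun hsup => h0 ?_), hX⟩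
  exact eq_zero_of_univ_sup_eq_zero hsup ▸ hc'

end

/-- Agents `0, 1, 2, 3–6` are `a, a', z, uᵢ` of the counterexample. -/
def counterexampleProfile : Fin 7 → List (Fin 7 ⊕ Bool) :=
  ![[Sum.inl 1, Sum.inr true], [Sum.inl 0, Sum.inr true], [Sum.inr false],
    [Sum.inl 2, Sum.inr true], [Sum.inl 2, Sum.inr true],
    [Sum.inl 2, Sum.inr true], [Sum.inl 2, Sum.inr true]]

theorem stmt17 :
    ∃ (B : Fin 7 → List (Fin 7 ⊕ Bool)) (a : Fin 7),
      (∃ X ∈ MinMaxSet B, maj X = true) ∧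
      ∀ X ∈ MinMaxSet (Function.update B a [Sum.inr true]), maj X ≠ true := by
  refine ⟨counterexampleProfile, 0,
    ⟨![true, true, false, true, true, true, true], ?_, by decide⟩, ?_⟩
  · have hc : ConsistentS counterexampleProfile ![1, 0, 0, 1, 1, 1, 1] :=
      ⟨by decide, (· < ·), inferInstance, by decide⟩
    have h0 : ¬ ConsistentS counterexampleProfile 0 :=
      not_consistentS_of_entry_cycle (a := 0) (b := 1) (by decide) (by decide)
    exact mem_minMaxSet_of_sup_le_one hc (by decide) h0 (by decide)
  · intro X hX
    have h0 : ConsistentS (Function.update counterexampleProfile 0 [Sum.inr true]) 0 :=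
      ⟨by decide, (· < ·), inferInstance, by decide⟩
    have hXeq : X = ![true, true, false, false, false, false, false] :=
      (votesOf_zero_of_mem_minMaxSet h0 hX).eq_of_consistentS h0 (by decide)
    rw [hXeq]
    decide
end
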